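/- Let v : [0,∞) → [0,∞) be continuous and satisfy v(t) ≤ a + b ∫₀^t (t−s)^{−σ} v(s) ds for all t ≥ 0, with a, b ≥ 0 and σ ∈ (0,1). Then there is a constant C₁ depending only on σ such that v(t) ≤ (C₁ a / (1−σ)) · exp( (b Γ(1−σ))^{1/(1−σ)} t ) for all t ≥ 0. -/

import Mathlib

/-!
With `β = 1 - σ`, `ρ = (b Γ(β))^(1/β)` and `V` a bound for `v` on `[0, t]`, iterating the
inequality `N` times gives
`v t ≤ a ∑_{n<N} (ρt)^{nβ}/Γ(nβ+1) + V (ρt)^{Nβ}/Γ(Nβ+1)`,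
because by the Beta integral the kernel `b (s - r)^(β-1)` maps each term of this
Mittag-Leffler series to the next one. The partial sums are at most `8 e^{ρt}/β`:
log-convexity of `Γ` bounds `z^x/Γ(x+1)` by `2 (z^m/m! + z^(m+1)/(m+1)!)` with `m = ⌊x⌋`, and
at most `⌈1/β⌉` indices `n` share the same `⌊nβ⌋`. Bounded partial sums also force the
remainder to tend to zero.
-/

open Real MeasureTheory Finset Filter Topology
open scoped Nat

lemma integral_sub_rpow_mul_rpow {p q t : ℝ} (hp : 0 < p) (hq : 0 < q) (ht : 0 < t) :
    ∫ r in (0 : ℝ)..t, (t - r) ^ (p - 1) * r ^ (q - 1) =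
      Gamma p * Gamma q / Gamma (p + q) * t ^ (p + q - 1) := by
  apply Complex.ofReal_injective
  have hbeta := Complex.betaIntegral_scaled (q : ℂ) (p : ℂ) ht
  rw [Complex.betaIntegral_eq_Gamma_mul_div _ _ (by simpa) (by simpa)] at hbeta
  rw [← intervalIntegral.integral_ofReal]
  push_cast [Complex.ofReal_cpow ht.le, ← Complex.Gamma_ofReal]
  rw [add_comm (p : ℂ) q]
  convert hbeta using 1
  · refine intervalIntegral.integral_congr fun r hr => ?_
    rw [Set.uIcc_of_le ht.le] at hr
    rw [Complex.ofReal_cpow (sub_nonneg.2 hr.2), Complex.ofReal_cpow hr.1]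
    push_cast
    ring
  · ring

lemma Gamma_nat_mul_rpow_le_Gamma_add {n : ℕ} (hn : 2 ≤ n) {x : ℝ} (hx : 0 ≤ x) :
    Gamma n * ((n : ℝ) - 1) ^ x ≤ Gamma (n + x) := by
  rcases hx.eq_or_lt with rfl | hx
  · simp
  have hn1 : (0 : ℝ) < n - 1 := by
    rw [sub_pos]; exact_mod_cast hn
  have hlog := BohrMollerup.f_add_nat_ge convexOn_log_Gamma (fun {y} hy => by
    rw [Function.comp_apply, Gamma_add_one hy.ne', log_mul hy.ne' (Gamma_pos_of_pos hy).ne',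
      add_comm, Function.comp_apply]) hn hx
  have hΓ : 0 < Gamma n := Gamma_pos_of_pos (by linarith)
  rw [← exp_le_exp, Function.comp_apply, Function.comp_apply, exp_add, exp_log hΓ,
    exp_log (Gamma_pos_of_pos (by linarith)), mul_comm x, ← rpow_def_of_pos hn1] at hlog
  exact hlog

lemma rpow_le_one_add {y θ : ℝ} (hy : 0 ≤ y) (hθ0 : 0 ≤ θ) (hθ1 : θ ≤ 1) : y ^ θ ≤ 1 + y := by
  rcases le_total y 1 with h | h
  · linarith [rpow_le_one hy h hθ0]
  · have := rpow_le_rpow_of_exponent_le h hθ1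
    rw [rpow_one] at this
    linarith

/-- Comparing with `Γ(x + 2)` makes the log-convexity bound available also when `⌊x⌋ = 0`. -/
lemma rpow_div_Gamma_add_one_le {z x : ℝ} (hz : 0 ≤ z) (hx : 0 ≤ x) :
    z ^ x / Gamma (x + 1) ≤
      2 * (z ^ ⌊x⌋₊ / (⌊x⌋₊ ! : ℝ) + z ^ (⌊x⌋₊ + 1) / ((⌊x⌋₊ + 1)! : ℝ)) := by
  set m := ⌊x⌋₊
  set θ := x - m
  have hθ0 : 0 ≤ θ := sub_nonneg.2 (Nat.floor_le hx)
  have hθ1 : θ ≤ 1 := by linarith [Nat.lt_floor_add_one x]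
  have hm : (0 : ℝ) < m + 1 := by positivity
  have hGamma : ((m + 1)! : ℝ) * ((m : ℝ) + 1) ^ θ ≤ (x + 1) * Gamma (x + 1) := by
    have h := Gamma_nat_mul_rpow_le_Gamma_add (n := m + 2) (by omega) hθ0
    rw [show ((m + 2 : ℕ) : ℝ) = (m + 1 : ℕ) + 1 by push_cast; ring, Gamma_nat_eq_factorial,
      show ((m + 1 : ℕ) : ℝ) + 1 + θ = (x + 1) + 1 by push_cast [θ]; ring,
      Gamma_add_one (by linarith)] at h
    push_cast at h
    convert h using 3; ring
  have hpow : z ^ x ≤ z ^ m * (((m : ℝ) + 1) ^ θ * (1 + z / (m + 1))) := by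
    rw [show x = m + θ by ring, rpow_add_of_nonneg hz (Nat.cast_nonneg m) hθ0, rpow_natCast]
    refine mul_le_mul_of_nonneg_left ?_ (by positivity)
    calc z ^ θ = ((m : ℝ) + 1) ^ θ * (z / (m + 1)) ^ θ := by
          rw [div_rpow hz hm.le, mul_div_cancel₀ _ (rpow_pos_of_pos hm θ).ne']
      _ ≤ ((m : ℝ) + 1) ^ θ * (1 + z / (m + 1)) :=
          mul_le_mul_of_nonneg_left (rpow_le_one_add (by positivity) hθ0 hθ1) (by positivity)
  calc z ^ x / Gamma (x + 1) = (x + 1) * z ^ x / ((x + 1) * Gamma (x + 1)) := by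
        rw [mul_div_mul_left _ _ (by linarith)]
    _ ≤ ((m : ℝ) + 1 + 1) * (z ^ m * (((m : ℝ) + 1) ^ θ * (1 + z / (m + 1)))) /
          (((m + 1)! : ℝ) * ((m : ℝ) + 1) ^ θ) := by
        gcongr
        linarith [Nat.lt_floor_add_one x]
    _ = ((m : ℝ) + 1 + 1) / (m + 1) * (z ^ m / (m ! : ℝ) + z ^ (m + 1) / ((m + 1)! : ℝ)) := by
        rw [Nat.factorial_succ]
        push_cast
        field_simp
        ring
    _ ≤ _ := by
        gcongr
        rw [div_le_iff₀ hm]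
        linarith

lemma sum_comp_le_mul_sum {ι κ : Type*} [DecidableEq κ] {s : Finset ι} {t : Finset κ}
    {f : κ → ℝ} (hf : ∀ m ∈ t, 0 ≤ f m) {g : ι → κ} (hg : ∀ n ∈ s, g n ∈ t) {K : ℕ}
    (hK : ∀ m ∈ t, #{n ∈ s | g n = m} ≤ K) :
    ∑ n ∈ s, f (g n) ≤ K * ∑ m ∈ t, f m := by
  rw [sum_comp, mul_sum]
  calc ∑ m ∈ s.image g, #{n ∈ s | g n = m} • f m
      ≤ ∑ m ∈ s.image g, (K : ℝ) * f m := by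
        refine sum_le_sum fun m hm => ?_
        have hmt : m ∈ t := by
          obtain ⟨n, hn, rfl⟩ := mem_image.1 hm
          exact hg n hn
        rw [nsmul_eq_mul]
        gcongr
        · exact hf m hmt
        · exact_mod_cast hK m hmt
    _ ≤ ∑ m ∈ t, (K : ℝ) * f m :=
        sum_le_sum_of_subset_of_nonneg (image_subset_iff.2 hg)
          fun m hm _ => mul_nonneg (Nat.cast_nonneg K) (hf m hm)

lemma card_filter_floor_mul_eq_le {β : ℝ} (hβ : 0 < β) (s : Finset ℕ) (m : ℕ) :
    #(s.filter fun n : ℕ => ⌊(n : ℝ) * β⌋₊ = m) ≤ ⌈1 / β⌉₊ := by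
  calc #(s.filter fun n : ℕ => ⌊(n : ℝ) * β⌋₊ = m)
      ≤ #(Ico ⌈(m : ℝ) / β⌉₊ ⌈((m : ℝ) + 1) / β⌉₊) := by
        refine card_le_card fun n hn => ?_
        obtain ⟨-, hnm⟩ := mem_filter.1 hn
        have hnβ : 0 ≤ (n : ℝ) * β := by positivity
        rw [mem_Ico, Nat.ceil_le, Nat.lt_ceil, div_le_iff₀ hβ, lt_div_iff₀ hβ, ← hnm]
        exact ⟨Nat.floor_le hnβ, Nat.lt_floor_add_one _⟩
    _ ≤ ⌈1 / β⌉₊ := by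
        rw [Nat.card_Ico, tsub_le_iff_left, add_div]
        exact Nat.ceil_add_le _ _

lemma sum_range_pow_div_factorial_add_succ_le {z : ℝ} (hz : 0 ≤ z) (N : ℕ) :
    ∑ m ∈ range N, 2 * (z ^ m / (m ! : ℝ) + z ^ (m + 1) / ((m + 1)! : ℝ)) ≤ 4 * exp z := by
  have hshift : ∑ m ∈ range N, z ^ (m + 1) / ((m + 1)! : ℝ) ≤ exp z := by
    have h := sum_le_exp_of_nonneg hz (N + 1)
    rw [sum_range_succ'] at h
    have h0 : 0 ≤ z ^ 0 / ((0 : ℕ)! : ℝ) := by positivity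
    linarith
  rw [← mul_sum, sum_add_distrib]
  linarith [sum_le_exp_of_nonneg hz N]

/-- The `n`-th term of the series `G_β(z) = ∑ z^{nβ}/Γ(nβ+1)`. -/
noncomputable def mittagLefflerTerm (β z : ℝ) (n : ℕ) : ℝ :=
  z ^ ((n : ℝ) * β) / Gamma ((n : ℝ) * β + 1)

@[simp]
lemma mittagLefflerTerm_zero (β z : ℝ) : mittagLefflerTerm β z 0 = 1 := by
  simp [mittagLefflerTerm]

lemma mittagLefflerTerm_nonneg {β z : ℝ} (hβ : 0 ≤ β) (hz : 0 ≤ z) (n : ℕ) :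
    0 ≤ mittagLefflerTerm β z n :=
  div_nonneg (rpow_nonneg hz _) (Gamma_pos_of_pos (by positivity)).le

lemma sum_mittagLefflerTerm_le {β z : ℝ} (hβ0 : 0 < β) (hβ1 : β ≤ 1) (hz : 0 ≤ z) (N : ℕ) :
    ∑ n ∈ range N, mittagLefflerTerm β z n ≤ 8 / β * exp z := by
  have hfloor : ∀ n ∈ range N, ⌊(n : ℝ) * β⌋₊ ∈ range N := fun n hn =>
    mem_range.2 <| (Nat.floor_le_of_le <| mul_le_of_le_one_right n.cast_nonneg hβ1).trans_lt
      (mem_range.1 hn)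
  have hceil : (⌈1 / β⌉₊ : ℝ) ≤ 2 / β := by
    have h1 : 1 ≤ 1 / β := by rw [le_div_iff₀ hβ0]; linarith
    linarith [Nat.ceil_lt_add_one (zero_le_one.trans h1), show 2 / β = 1 / β + 1 / β by ring]
  calc ∑ n ∈ range N, mittagLefflerTerm β z n
      ≤ ∑ n ∈ range N, 2 * (z ^ ⌊(n : ℝ) * β⌋₊ / (⌊(n : ℝ) * β⌋₊ ! : ℝ)
          + z ^ (⌊(n : ℝ) * β⌋₊ + 1) / ((⌊(n : ℝ) * β⌋₊ + 1)! : ℝ)) :=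
        sum_le_sum fun n _ => rpow_div_Gamma_add_one_le hz (by positivity)
    _ ≤ ⌈1 / β⌉₊ * ∑ m ∈ range N, 2 * (z ^ m / (m ! : ℝ) + z ^ (m + 1) / ((m + 1)! : ℝ)) :=
        sum_comp_le_mul_sum (f := fun m => 2 * (z ^ m / (m ! : ℝ) + z ^ (m + 1) / ((m + 1)! : ℝ)))
          (g := fun n : ℕ => ⌊(n : ℝ) * β⌋₊) (fun m _ => by positivity) hfloor
          fun m _ => card_filter_floor_mul_eq_le hβ0 _ m
    _ ≤ 2 / β * (4 * exp z) := by
        gcongr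
        exact sum_range_pow_div_factorial_add_succ_le hz N
    _ = 8 / β * exp z := by ring

lemma tendsto_mittagLefflerTerm_atTop {β z : ℝ} (hβ0 : 0 < β) (hβ1 : β ≤ 1) (hz : 0 ≤ z) :
    Tendsto (mittagLefflerTerm β z) atTop (𝓝 0) :=
  (summable_of_sum_range_le (mittagLefflerTerm_nonneg hβ0.le hz)
    (sum_mittagLefflerTerm_le hβ0 hβ1 hz)).tendsto_atTop_zero

lemma intervalIntegrable_sub_rpow_mul {β s : ℝ} (hβ : 0 < β) (hs : 0 ≤ s) {f : ℝ → ℝ}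
    (hf : ContinuousOn f (Set.Icc 0 s)) :
    IntervalIntegrable (fun r => (s - r) ^ (β - 1) * f r) volume 0 s := by
  have hker : IntervalIntegrable (fun r => (s - r) ^ (β - 1)) volume 0 s := by
    simpa using ((intervalIntegral.intervalIntegrable_rpow' (a := 0) (b := s)
      (by linarith : -1 < β - 1)).comp_sub_left s).symm
  exact hker.mul_continuousOn (by rwa [Set.uIcc_of_le hs])

lemma continuous_mittagLefflerTerm_mul {β : ℝ} (hβ : 0 ≤ β) (ρ : ℝ) (n : ℕ) :
    Continuous fun r => mittagLefflerTerm β (ρ * r) n :=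
  ((continuous_rpow_const (by positivity)).comp (continuous_const_mul ρ)).div_const _

lemma mul_integral_sub_rpow_mul_mittagLefflerTerm {β b ρ s : ℝ} (hβ : 0 < β) (hρ : 0 ≤ ρ)
    (hρβ : ρ ^ β = b * Gamma β) (hs : 0 ≤ s) (n : ℕ) :
    b * ∫ r in (0 : ℝ)..s, (s - r) ^ (β - 1) * mittagLefflerTerm β (ρ * r) n =
      mittagLefflerTerm β (ρ * s) (n + 1) := by
  rcases hs.eq_or_lt with rfl | hs
  · simp [mittagLefflerTerm, zero_rpow (by positivity : ((n : ℝ) + 1) * β ≠ 0)]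
  set x := (n : ℝ) * β
  have hx : 0 ≤ x := by positivity
  have hint : ∫ r in (0 : ℝ)..s, (s - r) ^ (β - 1) * mittagLefflerTerm β (ρ * r) n =
      ρ ^ x / Gamma (x + 1) * ∫ r in (0 : ℝ)..s, (s - r) ^ (β - 1) * r ^ ((x + 1) - 1) := by
    rw [← intervalIntegral.integral_const_mul]
    refine intervalIntegral.integral_congr fun r hr => ?_
    rw [Set.uIcc_of_le hs.le] at hr
    simp only [mittagLefflerTerm, mul_rpow hρ hr.1, add_sub_cancel_right]
    ring
  have hΓ : Gamma (x + 1) ≠ 0 := (Gamma_pos_of_pos (by positivity)).ne'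
  rw [hint, integral_sub_rpow_mul_rpow hβ (by positivity) hs, mittagLefflerTerm,
    show ((n + 1 : ℕ) : ℝ) * β = x + β by push_cast; ring, mul_rpow hρ hs.le,
    rpow_add_of_nonneg hρ hx hβ.le, hρβ, show β + (x + 1) - 1 = x + β by ring,
    show x + β + 1 = β + (x + 1) by ring]
  field_simp

lemma mul_integral_sub_rpow_mul_sum_mittagLefflerTerm {β b ρ s : ℝ} (hβ : 0 < β) (hρ : 0 ≤ ρ)
    (hρβ : ρ ^ β = b * Gamma β) (hs : 0 ≤ s) (N : ℕ) :
    b * ∫ r in (0 : ℝ)..s, (s - r) ^ (β - 1) * ∑ n ∈ range N, mittagLefflerTerm β (ρ * r) n =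
      ∑ n ∈ range N, mittagLefflerTerm β (ρ * s) (n + 1) := by
  simp_rw [mul_sum]
  rw [intervalIntegral.integral_finsetSum fun n _ => intervalIntegrable_sub_rpow_mul hβ hs
    (continuous_mittagLefflerTerm_mul hβ.le ρ n).continuousOn, mul_sum]
  exact sum_congr rfl fun n _ => mul_integral_sub_rpow_mul_mittagLefflerTerm hβ hρ hρβ hs n

lemma le_sum_mittagLefflerTerm_add {β b ρ a V t : ℝ} {v : ℝ → ℝ} (hβ : 0 < β) (hb : 0 ≤ b)
    (hρ : 0 ≤ ρ) (hρβ : ρ ^ β = b * Gamma β) (hv : ContinuousOn v (Set.Icc 0 t))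
    (hvV : ∀ s ∈ Set.Icc 0 t, v s ≤ V)
    (hva : ∀ s ∈ Set.Icc 0 t, v s ≤ a + b * ∫ r in (0 : ℝ)..s, (s - r) ^ (β - 1) * v r)
    (N : ℕ) : ∀ s ∈ Set.Icc 0 t, v s ≤
      a * ∑ n ∈ range N, mittagLefflerTerm β (ρ * s) n + V * mittagLefflerTerm β (ρ * s) N := by
  induction N with
  | zero =>
    intro s hs
    simpa using hvV s hs
  | succ N ih =>
    intro s hs
    have hsub : Set.Icc 0 s ⊆ Set.Icc 0 t := Set.Icc_subset_Icc_right hs.2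
    have hm := continuous_mittagLefflerTerm_mul hβ.le ρ
    have hS : IntervalIntegrable (fun r => (s - r) ^ (β - 1) *
        ∑ n ∈ range N, mittagLefflerTerm β (ρ * r) n) volume 0 s :=
      intervalIntegrable_sub_rpow_mul hβ hs.1 (continuous_finsetSum _ fun n _ => hm n).continuousOn
    have hN := intervalIntegrable_sub_rpow_mul hβ hs.1 (hm N).continuousOn
    have hbound : ∫ r in (0 : ℝ)..s, (s - r) ^ (β - 1) * v r ≤
        ∫ r in (0 : ℝ)..s, (a * ((s - r) ^ (β - 1) * ∑ n ∈ range N, mittagLefflerTerm β (ρ * r) n)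
          + V * ((s - r) ^ (β - 1) * mittagLefflerTerm β (ρ * r) N)) :=
      intervalIntegral.integral_mono_on hs.1
        (intervalIntegrable_sub_rpow_mul hβ hs.1 (hv.mono hsub))
        ((hS.const_mul a).add (hN.const_mul V)) fun r hr => by
          have := mul_le_mul_of_nonneg_left (ih r (hsub hr))
            (rpow_nonneg (sub_nonneg.2 hr.2) (β - 1))
          linarith
    rw [intervalIntegral.integral_add (hS.const_mul a) (hN.const_mul V),
      intervalIntegral.integral_const_mul, intervalIntegral.integral_const_mul] at hbound
    calc v s ≤ a + b * ∫ r in (0 : ℝ)..s, (s - r) ^ (β - 1) * v r := hva s hs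
      _ ≤ a + (a * (b * ∫ r in (0 : ℝ)..s, (s - r) ^ (β - 1) *
              ∑ n ∈ range N, mittagLefflerTerm β (ρ * r) n)
            + V * (b * ∫ r in (0 : ℝ)..s, (s - r) ^ (β - 1) * mittagLefflerTerm β (ρ * r) N)) := by
          linarith [mul_le_mul_of_nonneg_left hbound hb]
      _ = _ := by
          rw [mul_integral_sub_rpow_mul_sum_mittagLefflerTerm hβ hρ hρβ hs.1,
            mul_integral_sub_rpow_mul_mittagLefflerTerm hβ hρ hρβ hs.1, sum_range_succ' _ N,
            mittagLefflerTerm_zero]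
          ring

theorem stmt12 (σ : ℝ) (hσ0 : 0 < σ) (hσ1 : σ < 1) :
    ∃ C₁ > (0 : ℝ), ∀ (v : ℝ → ℝ) (a b : ℝ), 0 ≤ a → 0 ≤ b →
      ContinuousOn v (Set.Ici 0) → (∀ t ≥ (0 : ℝ), 0 ≤ v t) →
      (∀ t ≥ (0 : ℝ), v t ≤ a + b * ∫ s in (0 : ℝ)..t, (t - s) ^ (-σ) * v s) →
      ∀ t ≥ (0 : ℝ),
        v t ≤ C₁ * a / (1 - σ) *
          Real.exp ((b * Real.Gamma (1 - σ)) ^ (1 / (1 - σ)) * t) := by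
  refine ⟨8, by norm_num, fun v a b ha hb hv _ hva t ht => ?_⟩
  set β := 1 - σ
  have hβ0 : 0 < β := sub_pos.2 hσ1
  set ρ := (b * Gamma β) ^ (1 / β)
  have hρ : 0 ≤ ρ := rpow_nonneg (mul_nonneg hb (Gamma_pos_of_pos hβ0).le) _
  have hρβ : ρ ^ β = b * Gamma β := by
    rw [← rpow_mul (mul_nonneg hb (Gamma_pos_of_pos hβ0).le), one_div_mul_cancel hβ0.ne', rpow_one]
  have hvt : ContinuousOn v (Set.Icc 0 t) := hv.mono Set.Icc_subset_Ici_self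
  obtain ⟨V, hV⟩ := (isCompact_Icc.image_of_continuousOn hvt).bddAbove
  have hiter := le_sum_mittagLefflerTerm_add hβ0 hb hρ hρβ hvt (fun s hs => hV ⟨s, hs, rfl⟩)
    (fun s hs => by simpa [β, sub_sub_cancel_left] using hva s hs.1)
  have hz : 0 ≤ ρ * t := mul_nonneg hρ ht
  have hlim : Tendsto (fun N => a * (8 / β * exp (ρ * t)) + V * mittagLefflerTerm β (ρ * t) N)
      atTop (𝓝 (a * (8 / β * exp (ρ * t)))) := by
    simpa using tendsto_const_nhds.add
      ((tendsto_mittagLefflerTerm_atTop hβ0 (by linarith) hz).const_mul V)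
  calc v t ≤ a * (8 / β * exp (ρ * t)) := ge_of_tendsto hlim <| Eventually.of_forall fun N =>
        (hiter N t ⟨ht, le_rfl⟩).trans <| by
          gcongr
          exact sum_mittagLefflerTerm_le hβ0 (by linarith) hz N
    _ = 8 * a / (1 - σ) * exp (ρ * t) := by ring
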